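/- Let O be the set of 37 one-dimensional projection observables of Table I (identified with the 37 vectors up to sign/normalization), with the 26 contexts of Table II. Then there is no partial function v : O → {0,1} that is admissible and has v(P_a) = 1 = v(P_b). -/
import Mathlib


noncomputable def va : Fin 3 → ℝ := ![(1 : ℝ), (0 : ℝ), (0 : ℝ)]
noncomputable def vb : Fin 3 → ℝ := ![(Real.sqrt 2 : ℝ), (1 : ℝ), (1 : ℝ)]
noncomputable def v1 : Fin 3 → ℝ := ![(0 : ℝ), (1 : ℝ), (1 : ℝ)]
noncomputable def v2 : Fin 3 → ℝ := ![(0 : ℝ), (1 : ℝ), (-1 : ℝ)]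
noncomputable def v3 : Fin 3 → ℝ := ![(Real.sqrt 2 : ℝ), (-1 : ℝ), (-1 : ℝ)]
noncomputable def v4 : Fin 3 → ℝ := ![(0 : ℝ), (0 : ℝ), (1 : ℝ)]
noncomputable def v5 : Fin 3 → ℝ := ![(0 : ℝ), (1 : ℝ), (0 : ℝ)]
noncomputable def v6 : Fin 3 → ℝ := ![(Real.sqrt 2 : ℝ), (1 : ℝ), (-3 : ℝ)]
noncomputable def v7 : Fin 3 → ℝ := ![(1 : ℝ), (-Real.sqrt 2 : ℝ), (0 : ℝ)]
noncomputable def v8 : Fin 3 → ℝ := ![(Real.sqrt 2 : ℝ), (-3 : ℝ), (1 : ℝ)]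
noncomputable def v9 : Fin 3 → ℝ := ![(1 : ℝ), (0 : ℝ), (-Real.sqrt 2 : ℝ)]
noncomputable def v10 : Fin 3 → ℝ := ![(Real.sqrt 2 : ℝ), (1 : ℝ), (0 : ℝ)]
noncomputable def v11 : Fin 3 → ℝ := ![(Real.sqrt 2 : ℝ), (0 : ℝ), (1 : ℝ)]
noncomputable def v12 : Fin 3 → ℝ := ![(Real.sqrt 2 : ℝ), (-2 : ℝ), (-3 : ℝ)]
noncomputable def v13 : Fin 3 → ℝ := ![(1 : ℝ), (-Real.sqrt 2 : ℝ), (Real.sqrt 2 : ℝ)]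
noncomputable def v14 : Fin 3 → ℝ := ![(Real.sqrt 2 : ℝ), (-3 : ℝ), (-2 : ℝ)]
noncomputable def v15 : Fin 3 → ℝ := ![(1 : ℝ), (Real.sqrt 2 : ℝ), (-Real.sqrt 2 : ℝ)]
noncomputable def v16 : Fin 3 → ℝ := ![(Real.sqrt 8 : ℝ), (1 : ℝ), (-1 : ℝ)]
noncomputable def v17 : Fin 3 → ℝ := ![(Real.sqrt 8 : ℝ), (-1 : ℝ), (1 : ℝ)]
noncomputable def v18 : Fin 3 → ℝ := ![(Real.sqrt 2 : ℝ), (-7 : ℝ), (-3 : ℝ)]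
noncomputable def v19 : Fin 3 → ℝ := ![(Real.sqrt 2 : ℝ), (-1 : ℝ), (3 : ℝ)]
noncomputable def v20 : Fin 3 → ℝ := ![(Real.sqrt 2 : ℝ), (-3 : ℝ), (-7 : ℝ)]
noncomputable def v21 : Fin 3 → ℝ := ![(Real.sqrt 2 : ℝ), (3 : ℝ), (-1 : ℝ)]
noncomputable def v22 : Fin 3 → ℝ := ![(1 : ℝ), (Real.sqrt 2 : ℝ), (0 : ℝ)]
noncomputable def v23 : Fin 3 → ℝ := ![(1 : ℝ), (0 : ℝ), (Real.sqrt 2 : ℝ)]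
noncomputable def v24 : Fin 3 → ℝ := ![(Real.sqrt 2 : ℝ), (-1 : ℝ), (-3 : ℝ)]
noncomputable def v25 : Fin 3 → ℝ := ![(Real.sqrt 2 : ℝ), (-1 : ℝ), (1 : ℝ)]
noncomputable def v26 : Fin 3 → ℝ := ![(Real.sqrt 2 : ℝ), (-3 : ℝ), (-1 : ℝ)]
noncomputable def v27 : Fin 3 → ℝ := ![(Real.sqrt 2 : ℝ), (1 : ℝ), (-1 : ℝ)]
noncomputable def v28 : Fin 3 → ℝ := ![(Real.sqrt 2 : ℝ), (-1 : ℝ), (0 : ℝ)]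
noncomputable def v29 : Fin 3 → ℝ := ![(Real.sqrt 2 : ℝ), (0 : ℝ), (-1 : ℝ)]
noncomputable def v30 : Fin 3 → ℝ := ![(Real.sqrt 2 : ℝ), (2 : ℝ), (3 : ℝ)]
noncomputable def v31 : Fin 3 → ℝ := ![(Real.sqrt 2 : ℝ), (3 : ℝ), (2 : ℝ)]
noncomputable def v32 : Fin 3 → ℝ := ![(Real.sqrt 2 : ℝ), (3 : ℝ), (7 : ℝ)]
noncomputable def v33 : Fin 3 → ℝ := ![(Real.sqrt 2 : ℝ), (7 : ℝ), (3 : ℝ)]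
noncomputable def v34 : Fin 3 → ℝ := ![(Real.sqrt 2 : ℝ), (1 : ℝ), (3 : ℝ)]
noncomputable def v35 : Fin 3 → ℝ := ![(Real.sqrt 2 : ℝ), (3 : ℝ), (1 : ℝ)]

/-- Admissibility rules (a) and (b) for one element of a context relative to the other two. -/
def adm3 (v : (Fin 3 → ℝ) → Option Bool) (p q r : Fin 3 → ℝ) : Prop :=
  (v p = some true → v q = some false ∧ v r = some false) ∧
  ((v q = some false ∧ v r = some false) → v p = some true)

/-- A partial value assignment on the 37 observables of Table I is admissible if it satisfies
rules (a) and (b) in each of the 26 contexts of Table II. -/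
def AdmissibleTable (v : (Fin 3 → ℝ) → Option Bool) : Prop :=
  (adm3 v va v1 v2 ∧ adm3 v v1 v2 va ∧ adm3 v v2 va v1) ∧
  (adm3 v va v4 v5 ∧ adm3 v v4 v5 va ∧ adm3 v v5 va v4) ∧
  (adm3 v vb v2 v3 ∧ adm3 v v2 v3 vb ∧ adm3 v v3 vb v2) ∧
  (adm3 v vb v6 v7 ∧ adm3 v v6 v7 vb ∧ adm3 v v7 vb v6) ∧
  (adm3 v vb v8 v9 ∧ adm3 v v8 v9 vb ∧ adm3 v v9 vb v8) ∧
  (adm3 v v4 v7 v10 ∧ adm3 v v7 v10 v4 ∧ adm3 v v10 v4 v7) ∧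
  (adm3 v v5 v9 v11 ∧ adm3 v v9 v11 v5 ∧ adm3 v v11 v5 v9) ∧
  (adm3 v v10 v12 v13 ∧ adm3 v v12 v13 v10 ∧ adm3 v v13 v10 v12) ∧
  (adm3 v v11 v14 v15 ∧ adm3 v v14 v15 v11 ∧ adm3 v v15 v11 v14) ∧
  (adm3 v v1 v13 v16 ∧ adm3 v v13 v16 v1 ∧ adm3 v v16 v1 v13) ∧
  (adm3 v v1 v15 v17 ∧ adm3 v v15 v17 v1 ∧ adm3 v v17 v1 v15) ∧
  (adm3 v v16 v18 v19 ∧ adm3 v v18 v19 v16 ∧ adm3 v v19 v16 v18) ∧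
  (adm3 v v17 v20 v21 ∧ adm3 v v20 v21 v17 ∧ adm3 v v21 v17 v20) ∧
  (adm3 v v3 v19 v22 ∧ adm3 v v19 v22 v3 ∧ adm3 v v22 v3 v19) ∧
  (adm3 v v3 v21 v23 ∧ adm3 v v21 v23 v3 ∧ adm3 v v23 v3 v21) ∧
  (adm3 v v22 v24 v25 ∧ adm3 v v24 v25 v22 ∧ adm3 v v25 v22 v24) ∧
  (adm3 v v23 v26 v27 ∧ adm3 v v26 v27 v23 ∧ adm3 v v27 v23 v26) ∧
  (adm3 v v4 v22 v28 ∧ adm3 v v22 v28 v4 ∧ adm3 v v28 v4 v22) ∧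
  (adm3 v v5 v23 v29 ∧ adm3 v v23 v29 v5 ∧ adm3 v v29 v5 v23) ∧
  (adm3 v v15 v28 v30 ∧ adm3 v v28 v30 v15 ∧ adm3 v v30 v15 v28) ∧
  (adm3 v v13 v29 v31 ∧ adm3 v v29 v31 v13 ∧ adm3 v v31 v13 v29) ∧
  (adm3 v v8 v16 v32 ∧ adm3 v v16 v32 v8 ∧ adm3 v v32 v8 v16) ∧
  (adm3 v v6 v17 v33 ∧ adm3 v v17 v33 v6 ∧ adm3 v v33 v6 v17) ∧
  (adm3 v v7 v27 v34 ∧ adm3 v v27 v34 v7 ∧ adm3 v v34 v7 v27) ∧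
  (adm3 v v9 v25 v35 ∧ adm3 v v25 v35 v9 ∧ adm3 v v35 v9 v25) ∧
  (adm3 v v1 v25 v27 ∧ adm3 v v25 v27 v1 ∧ adm3 v v27 v1 v25)

theorem no_admissible_with_va_vb_one :
    ¬ ∃ v : (Fin 3 → ℝ) → Option Bool,
      AdmissibleTable v ∧ v va = some true ∧ v vb = some true := by
  rintro ⟨v, hA, ha, hb⟩
  obtain ⟨⟨A1, -, -⟩, ⟨A2, -, -⟩, ⟨A3, -, -⟩, ⟨A4, -, -⟩, ⟨A5, -, -⟩,
    ⟨-, -, A6⟩, ⟨-, -, A7⟩, ⟨A8, -, -⟩, ⟨A9, -, -⟩, ⟨-, -, A10⟩, ⟨-, -, A11⟩,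
    ⟨A12, -, -⟩, ⟨A13, -, -⟩, ⟨-, -, A14⟩, ⟨-, -, A15⟩, ⟨A16, -, -⟩, ⟨A17, -, -⟩,
    -, -, -, -, -, -, -, -, ⟨A26, -, -⟩⟩ := hA
  obtain ⟨h1, h2⟩ := A1.1 ha
  obtain ⟨h4, h5⟩ := A2.1 ha
  obtain ⟨-, h3⟩ := A3.1 hb
  obtain ⟨h6, h7⟩ := A4.1 hb
  obtain ⟨h8, h9⟩ := A5.1 hb
  have h10 := A6.2 ⟨h4, h7⟩
  have h11 := A7.2 ⟨h5, h9⟩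
  obtain ⟨h12, h13⟩ := A8.1 h10
  obtain ⟨h14, h15⟩ := A9.1 h11
  have h16 := A10.2 ⟨h1, h13⟩
  have h17 := A11.2 ⟨h1, h15⟩
  obtain ⟨h18, h19⟩ := A12.1 h16
  obtain ⟨h20, h21⟩ := A13.1 h17
  have h22 := A14.2 ⟨h3, h19⟩
  have h23 := A15.2 ⟨h3, h21⟩
  obtain ⟨h24, h25⟩ := A16.1 h22
  obtain ⟨h26, h27⟩ := A17.1 h23
  have h1' := A26.2 ⟨h25, h27⟩
  rw [h1] at h1'
  exact absurd h1' (by simp)
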